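/- Let n ≥ 2 and g_1,…,g_{n+1} ∈ ℝ. Define Q : ℝ^n × ℝ^n → ℝ by Q(x,z) = exp(−g_1 e^{z_1} − Σ_{i=1}^{n−1}(e^{x_i − z_i} + g_{i+1} e^{z_{i+1} − x_i}) − e^{x_n − z_n} − g_{n+1} e^{−x_n − z_n}). Then pointwise: (−(1/2)Σ_{i=1}^n ∂²/∂x_i² + g_1 e^{x_1} + Σ_{i=1}^{n−1} g_{i+1} e^{x_{i+1}−x_i} + g_n g_{n+1} e^{−x_n − x_{n−1}}) Q = (−(1/2)Σ_{i=1}^n ∂²/∂z_i² − (g_1/2) e^{z_1} + (g_1²/2) e^{2z_1} + Σ_{i=1}^{n−1} g_{i+1} e^{z_{i+1}−z_i} + 2 g_{n+1} e^{−2z_n}) Q. -/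

import Mathlib

/-!
Write `u i = e^{x_i - z_i}`, `v 0 = g₁ e^{z₁}`, `v i = g_{i+1} e^{z_{i+1} - x_i}` for `0 < i < n` and
`v n = g_{n+1} e^{-x_n - z_n}`, so that `Q = exp (-(v 0 + ∑_{i=1}^n (u i + v i)))`. In each single
variable `t` the exponent is `const - (a e^t + b e^{-t})`, hence `∂²Q = ((b - a)² - (a + b)) Q`:
in `x_i` the pair `(a, b)` is `(u i, v i)`, in `z_j` it is `(v (j-1), u j)`, with `v n` added to `b`
when `j = n`. After dividing by `Q` everything is quadratic in the `u`'s and `v`'s. With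
`φ t = (t² - t) / 2`,
`-½((v j - u j)² - (u j + v j)) + v (j-1) u j`
`= -½((u j - v (j-1))² - (v (j-1) + u j)) + u j v j + φ (v (j-1)) - φ (v j)`,
which telescopes over `j` to `φ (v 0) - φ (v n)`: `φ (v 0)` is the `g₁`-part of the `BC''_n`
potential, and `-φ (v n)` is balanced by the extra `v n` in the `z_n`-direction.
-/

/-- Second partial derivative of `f` along the `i`-th coordinate at the point `p`. -/
noncomputable def pd2 (f : (ℕ → ℝ) → ℝ) (i : ℕ) (p : ℕ → ℝ) : ℝ :=
  deriv (deriv (fun t => f (Function.update p i t))) (p i)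

open Real Finset

theorem deriv_deriv_exp_sub_exp_add_exp (c a b t₀ : ℝ) :
    deriv (deriv fun t => exp (c - (a * exp (t - t₀) + b * exp (t₀ - t)))) t₀
      = ((b - a) ^ 2 - (a + b)) * exp (c - (a + b)) := by
  have hup (t : ℝ) : HasDerivAt (fun t => exp (t - t₀)) (exp (t - t₀)) t := by
    simpa using ((hasDerivAt_id t).sub_const t₀).exp
  have hdown (t : ℝ) : HasDerivAt (fun t => exp (t₀ - t)) (-exp (t₀ - t)) t := by
    simpa using ((hasDerivAt_id t).const_sub t₀).exp
  have hfirst (t : ℝ) : HasDerivAt (fun t => exp (c - (a * exp (t - t₀) + b * exp (t₀ - t))))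
      (exp (c - (a * exp (t - t₀) + b * exp (t₀ - t)))
        * (b * exp (t₀ - t) - a * exp (t - t₀))) t := by
    have h := ((((hup t).const_mul a).add ((hdown t).const_mul b)).const_sub c).exp
    simp only [Pi.add_apply] at h
    convert h using 1
    ring
  have hsecond := (hfirst t₀).mul (((hdown t₀).const_mul b).sub ((hup t₀).const_mul a))
  simp only [Pi.sub_apply, sub_self, exp_zero, mul_one] at hsecond
  rw [funext fun t => (hfirst t).deriv]
  refine hsecond.deriv.trans ?_
  ring

theorem pd2_exp_sub_sum (s : Finset ℕ) (a b : ℕ → ℝ) (c : ℝ) {i : ℕ} (hi : i ∈ s) (p : ℕ → ℝ) :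
    pd2 (fun q => exp (c - ∑ j ∈ s, (a j * exp (q j - p j) + b j * exp (p j - q j)))) i p
      = ((b i - a i) ^ 2 - (a i + b i)) * exp (c - ∑ j ∈ s, (a j + b j)) := by
  have hline (t : ℝ) : c - ∑ j ∈ s, (a j * exp (Function.update p i t j - p j)
        + b j * exp (p j - Function.update p i t j))
      = (c - ∑ j ∈ s.erase i, (a j + b j)) - (a i * exp (t - p i) + b i * exp (p i - t)) := by
    have hrest : ∑ j ∈ s.erase i, (a j * exp (Function.update p i t j - p j)
        + b j * exp (p j - Function.update p i t j)) = ∑ j ∈ s.erase i, (a j + b j) :=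
      sum_congr rfl fun j hj => by simp [Function.update_of_ne (ne_of_mem_erase hj)]
    rw [← add_sum_erase s _ hi, Function.update_self, hrest]
    ring
  unfold pd2
  simp only [hline, deriv_deriv_exp_sub_exp_add_exp,
    ← add_sum_erase s (fun j => a j + b j) hi]
  congr 2
  ring

theorem intertwining_identity (u v : ℕ → ℝ) (m : ℕ) :
    -(1 / 2) * ∑ j ∈ Icc 1 (m + 1), ((v j - u j) ^ 2 - (u j + v j))
        + (v 0 * u 1 + ∑ i ∈ Icc 1 m, v i * u (i + 1) + v m * v (m + 1))
      = -(1 / 2) * (∑ j ∈ Icc 1 m, ((u j - v (j - 1)) ^ 2 - (v (j - 1) + u j))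
          + ((u (m + 1) + v (m + 1) - v m) ^ 2 - (v m + (u (m + 1) + v (m + 1)))))
        + (-(1 / 2) * v 0 + 1 / 2 * v 0 ^ 2 + ∑ i ∈ Icc 1 m, u i * v i
          + 2 * (u (m + 1) * v (m + 1))) := by
  induction m with
  | zero =>
    simp only [zero_add, Icc_self, sum_singleton, Icc_eq_empty_of_lt zero_lt_one, sum_empty]
    ring
  | succ m ih =>
    have hsplit (f : ℕ → ℝ) := sum_Icc_succ_top (Nat.le_add_left 1 m) f
    rw [sum_Icc_succ_top (Nat.le_add_left 1 (m + 1)), hsplit (fun i => v i * u (i + 1)),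
      hsplit (fun j => (u j - v (j - 1)) ^ 2 - (v (j - 1) + u j)), hsplit (fun i => u i * v i),
      Nat.add_sub_cancel]
    linear_combination ih

theorem add_sum_Icc_one_eq_sum_pred_add (f : ℕ → ℝ) (n : ℕ) :
    f 0 + ∑ i ∈ Icc 1 n, f i = ∑ i ∈ Icc 1 n, f (i - 1) + f n := by
  induction n with
  | zero => simp
  | succ n ih =>
    rw [sum_Icc_succ_top (Nat.le_add_left 1 n), sum_Icc_succ_top (Nat.le_add_left 1 n),
      ← add_assoc, ih, Nat.add_sub_cancel]

noncomputable def kernelU (x z : ℕ → ℝ) (i : ℕ) : ℝ := exp (x i - z i)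

noncomputable def kernelV (n : ℕ) (g x z : ℕ → ℝ) (i : ℕ) : ℝ :=
  if i = 0 then g 1 * exp (z 1)
  else if i = n then g (n + 1) * exp (-x n - z n)
  else g (i + 1) * exp (z (i + 1) - x i)

noncomputable def todaKernel (n : ℕ) (g x z : ℕ → ℝ) : ℝ :=
  exp (-(g 1 * exp (z 1))
    - (∑ i ∈ Icc 1 (n - 1), (exp (x i - z i) + g (i + 1) * exp (z (i + 1) - x i)))
    - exp (x n - z n) - g (n + 1) * exp (-x n - z n))

section kernel

variable {n : ℕ} {g x z : ℕ → ℝ}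

theorem todaKernel_eq_exp_sum (hn : 1 ≤ n) :
    todaKernel n g x z
      = exp (-kernelV n g x z 0 - ∑ i ∈ Icc 1 n, (kernelU x z i + kernelV n g x z i)) := by
  obtain ⟨m, rfl⟩ : ∃ m, n = m + 1 := ⟨n - 1, by omega⟩
  have hbulk : ∀ i ∈ Icc 1 m, kernelU x z i + kernelV (m + 1) g x z i
      = exp (x i - z i) + g (i + 1) * exp (z (i + 1) - x i) := fun i hi => by
    have := mem_Icc.mp hi
    simp [kernelU, kernelV, show i ≠ 0 by omega, show i ≠ m + 1 by omega]
  rw [todaKernel, Nat.add_sub_cancel, sum_Icc_succ_top (Nat.le_add_left 1 m), sum_congr rfl hbulk]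
  simp only [kernelU, kernelV, if_true, if_neg (Nat.succ_ne_zero m)]
  congr 1
  ring

theorem todaKernel_eq_exp_sum_pred (hn : 1 ≤ n) :
    todaKernel n g x z = exp (0 - ∑ j ∈ Icc 1 n,
      (kernelV n g x z (j - 1) + (kernelU x z j + if j = n then kernelV n g x z j else 0))) := by
  rw [todaKernel_eq_exp_sum hn, sum_add_distrib, sum_add_distrib, sum_add_distrib,
    sum_ite_eq' (Icc 1 n) n, if_pos (mem_Icc.mpr ⟨hn, le_rfl⟩)]
  congr 1
  linear_combination -add_sum_Icc_one_eq_sum_pred_add (kernelV n g x z) n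

theorem kernelU_eq_mul_exp_fst (x' : ℕ → ℝ) (j : ℕ) :
    kernelU x z j = kernelU x' z j * exp (x j - x' j) := by
  simp only [kernelU, ← exp_add]
  ring_nf

theorem kernelV_eq_mul_exp_fst (x' : ℕ → ℝ) {j : ℕ} (hj : j ≠ 0) :
    kernelV n g x z j = kernelV n g x' z j * exp (x' j - x j) := by
  unfold kernelV
  split_ifs with h0 hjn
  · exact absurd h0 hj
  · subst hjn; rw [mul_assoc, ← exp_add]; ring_nf
  · rw [mul_assoc, ← exp_add]; ring_nf

theorem kernelU_eq_mul_exp_snd (z' : ℕ → ℝ) (j : ℕ) :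
    kernelU x z j = kernelU x z' j * exp (z' j - z j) := by
  simp only [kernelU, ← exp_add]
  ring_nf

theorem kernelV_pred_eq_mul_exp_snd (z' : ℕ → ℝ) {j : ℕ} (hj : j ∈ Icc 1 n) :
    kernelV n g x z (j - 1) = kernelV n g x z' (j - 1) * exp (z j - z' j) := by
  obtain ⟨hj1, hjn⟩ := mem_Icc.mp hj
  unfold kernelV
  split_ifs with h0 <;> rw [mul_assoc, ← exp_add]
  · rw [show j = 1 by omega]; ring_nf
  · omega
  · rw [Nat.sub_add_cancel hj1]; ring_nf

theorem kernelV_self_eq_mul_exp_snd (z' : ℕ → ℝ) (hn : n ≠ 0) :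
    kernelV n g x z n = kernelV n g x z' n * exp (z' n - z n) := by
  simp only [kernelV, if_neg hn, if_true]
  rw [mul_assoc, ← exp_add]
  ring_nf

theorem pd2_todaKernel_fst (hn : 1 ≤ n) {i : ℕ} (hi : i ∈ Icc 1 n) :
    pd2 (fun x' => todaKernel n g x' z) i x
      = ((kernelV n g x z i - kernelU x z i) ^ 2 - (kernelU x z i + kernelV n g x z i))
        * todaKernel n g x z := by
  have hsep : (fun x' => todaKernel n g x' z) = fun x' => exp (-kernelV n g x z 0
      - ∑ j ∈ Icc 1 n,
          (kernelU x z j * exp (x' j - x j) + kernelV n g x z j * exp (x j - x' j))) := by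
    funext x'
    rw [todaKernel_eq_exp_sum hn, sum_congr rfl fun j hj => by
      rw [kernelU_eq_mul_exp_fst x,
        kernelV_eq_mul_exp_fst x (Nat.one_le_iff_ne_zero.mp (mem_Icc.mp hj).1)]]
    simp [kernelV]
  rw [hsep, pd2_exp_sub_sum _ _ _ _ hi, todaKernel_eq_exp_sum hn]

theorem pd2_todaKernel_snd (hn : 1 ≤ n) {j : ℕ} (hj : j ∈ Icc 1 n) :
    pd2 (fun z' => todaKernel n g x z') j z
      = (((kernelU x z j + if j = n then kernelV n g x z j else 0) - kernelV n g x z (j - 1)) ^ 2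
          - (kernelV n g x z (j - 1) + (kernelU x z j + if j = n then kernelV n g x z j else 0)))
        * todaKernel n g x z := by
  have hsep : (fun z' => todaKernel n g x z') = fun z' => exp (0 - ∑ k ∈ Icc 1 n,
      (kernelV n g x z (k - 1) * exp (z' k - z k)
        + (kernelU x z k + if k = n then kernelV n g x z k else 0) * exp (z k - z' k))) := by
    funext z'
    rw [todaKernel_eq_exp_sum_pred hn]
    congr 2
    refine sum_congr rfl fun k hk => ?_
    rw [kernelV_pred_eq_mul_exp_snd z hk, kernelU_eq_mul_exp_snd z]
    split_ifs with hkn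
    · subst hkn; rw [kernelV_self_eq_mul_exp_snd z (by omega)]; ring
    · ring
  rw [hsep, pd2_exp_sub_sum _ _ _ _ hj, todaKernel_eq_exp_sum_pred hn]

theorem sum_pd2_todaKernel_snd (m : ℕ) :
    ∑ j ∈ Icc 1 (m + 1), pd2 (fun z' => todaKernel (m + 1) g x z') j z
      = (∑ j ∈ Icc 1 m, ((kernelU x z j - kernelV (m + 1) g x z (j - 1)) ^ 2
            - (kernelV (m + 1) g x z (j - 1) + kernelU x z j))
          + ((kernelU x z (m + 1) + kernelV (m + 1) g x z (m + 1) - kernelV (m + 1) g x z m) ^ 2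
            - (kernelV (m + 1) g x z m + (kernelU x z (m + 1) + kernelV (m + 1) g x z (m + 1)))))
        * todaKernel (m + 1) g x z := by
  rw [sum_congr rfl fun j hj => pd2_todaKernel_snd (Nat.le_add_left 1 m) hj,
    sum_Icc_succ_top (Nat.le_add_left 1 m), add_mul, sum_mul]
  congr 1
  · refine sum_congr rfl fun j hj => ?_
    rw [if_neg (by have := (mem_Icc.mp hj).2; omega), add_zero]
  · rw [if_pos rfl, Nat.add_sub_cancel]

end kernel

section potential

variable {m : ℕ} {g x z : ℕ → ℝ}

theorem todaB_potential_eq (hm : 1 ≤ m) :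
    g 1 * exp (x 1) + ∑ i ∈ Icc 1 m, g (i + 1) * exp (x (i + 1) - x i)
        + g (m + 1) * g (m + 1 + 1) * exp (-x (m + 1) - x m)
      = kernelV (m + 1) g x z 0 * kernelU x z 1
        + ∑ i ∈ Icc 1 m, kernelV (m + 1) g x z i * kernelU x z (i + 1)
        + kernelV (m + 1) g x z m * kernelV (m + 1) g x z (m + 1) := by
  have hbulk : ∀ i ∈ Icc 1 m, kernelV (m + 1) g x z i * kernelU x z (i + 1)
      = g (i + 1) * exp (x (i + 1) - x i) := fun i hi => by
    have := mem_Icc.mp hi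
    simp only [kernelV, kernelU, if_neg (show i ≠ 0 by omega), if_neg (show i ≠ m + 1 by omega),
      mul_assoc, ← exp_add]
    ring_nf
  have hbot : kernelV (m + 1) g x z 0 * kernelU x z 1 = g 1 * exp (x 1) := by
    simp only [kernelV, kernelU, if_true, mul_assoc, ← exp_add]
    ring_nf
  have htop : kernelV (m + 1) g x z m * kernelV (m + 1) g x z (m + 1)
      = g (m + 1) * g (m + 1 + 1) * exp (-x (m + 1) - x m) := by
    simp only [kernelV, if_neg (show m ≠ 0 by omega), if_neg (show m ≠ m + 1 by omega),
      if_neg (show m + 1 ≠ 0 by omega), if_true, mul_mul_mul_comm, ← exp_add]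
    ring_nf
  rw [sum_congr rfl hbulk, hbot, htop]

theorem todaBC_potential_eq :
    -(g 1 / 2) * exp (z 1) + g 1 ^ 2 / 2 * exp (2 * z 1)
        + ∑ i ∈ Icc 1 m, g (i + 1) * exp (z (i + 1) - z i)
        + 2 * g (m + 1 + 1) * exp (-2 * z (m + 1))
      = -(1 / 2) * kernelV (m + 1) g x z 0 + 1 / 2 * kernelV (m + 1) g x z 0 ^ 2
        + ∑ i ∈ Icc 1 m, kernelU x z i * kernelV (m + 1) g x z i
        + 2 * (kernelU x z (m + 1) * kernelV (m + 1) g x z (m + 1)) := by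
  have hbulk : ∀ i ∈ Icc 1 m, kernelU x z i * kernelV (m + 1) g x z i
      = g (i + 1) * exp (z (i + 1) - z i) := fun i hi => by
    have := mem_Icc.mp hi
    simp only [kernelV, kernelU, if_neg (show i ≠ 0 by omega), if_neg (show i ≠ m + 1 by omega),
      mul_left_comm _ (g (i + 1)), ← exp_add]
    ring_nf
  have hbot : kernelV (m + 1) g x z 0 = g 1 * exp (z 1) := if_pos rfl
  have htop : kernelU x z (m + 1) * kernelV (m + 1) g x z (m + 1)
      = g (m + 1 + 1) * exp (-2 * z (m + 1)) := by
    simp only [kernelV, kernelU, if_neg (show m + 1 ≠ 0 by omega), if_true,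
      mul_left_comm _ (g (m + 1 + 1)), ← exp_add]
    ring_nf
  rw [sum_congr rfl hbulk, hbot, htop, show 2 * z 1 = z 1 + z 1 by ring, exp_add]
  ring

end potential

/-- The elementary kernel intertwining the affine `B_n^{(1)}` Toda chain with the affine
non-reduced `BC''_n` Toda chain, pointwise. -/
theorem stmt_14 (n : ℕ) (hn : 2 ≤ n) (g : ℕ → ℝ) :
    let Q : (ℕ → ℝ) → (ℕ → ℝ) → ℝ := fun x z =>
      Real.exp (-(g 1 * Real.exp (z 1))
        - (∑ i ∈ Finset.Icc 1 (n - 1),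
            (Real.exp (x i - z i) + g (i + 1) * Real.exp (z (i + 1) - x i)))
        - Real.exp (x n - z n) - g (n + 1) * Real.exp (-x n - z n))
    ∀ x z : ℕ → ℝ,
      -(1 / 2) * (∑ i ∈ Finset.Icc 1 n, pd2 (fun x' => Q x' z) i x)
          + (g 1 * Real.exp (x 1)
              + (∑ i ∈ Finset.Icc 1 (n - 1), g (i + 1) * Real.exp (x (i + 1) - x i))
              + g n * g (n + 1) * Real.exp (-x n - x (n - 1))) * Q x z
        = -(1 / 2) * (∑ i ∈ Finset.Icc 1 n, pd2 (fun z' => Q x z') i z)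
          + (-(g 1 / 2) * Real.exp (z 1) + g 1 ^ 2 / 2 * Real.exp (2 * z 1)
              + (∑ i ∈ Finset.Icc 1 (n - 1), g (i + 1) * Real.exp (z (i + 1) - z i))
              + 2 * g (n + 1) * Real.exp (-2 * z n)) * Q x z := by
  obtain ⟨m, rfl⟩ : ∃ m, n = m + 1 := ⟨n - 1, by omega⟩
  intro Q x z
  have hQ : ∀ x z, Q x z = todaKernel (m + 1) g x z := fun _ _ => rfl
  simp only [hQ, Nat.add_sub_cancel]
  rw [sum_congr rfl fun i hi => pd2_todaKernel_fst (Nat.le_add_left 1 m) hi, ← sum_mul,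
    sum_pd2_todaKernel_snd, todaB_potential_eq (by omega), todaBC_potential_eq]
  linear_combination
    todaKernel (m + 1) g x z * intertwining_identity (kernelU x z) (kernelV (m + 1) g x z) m
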